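/- If revocation occurs at true time t_r and the last heartbeat has epoch e_r = ⌊t_r / Δ⌋, then any verifier with local clock t_v satisfying the freshness check ⌊t_v/Δ⌋ - e_r ≤ W/Δ (where Δ > 0 divides W) and with clock offset |t_v - t| ≤ ε relative to true time t, accepts only at true times t < t_r + W + Δ + ε. Hence the zombie window is at most W + Δ + ε. -/
import Mathlib


/-- **Bounded zombie window.** If revocation occurs at true time `t_r` with last
heartbeat epoch `⌊t_r/Δ⌋`, then a verifier with local clock `t_v` (offset from true
time `t` by at most `ε`) whose freshness check `⌊t_v/Δ⌋ - e_r ≤ W/Δ` passes can only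
accept at true times `t < t_r + W + Δ + ε`. -/
theorem bounded_zombie_window
    (Δ W ε t_r t t_v : ℝ) (hΔ : 0 < Δ) (hW : 0 < W)
    (hdvd : ∃ n : ℕ, W = n * Δ) (hε : 0 ≤ ε)
    (hskew : |t_v - t| ≤ ε)
    (hfresh : ((⌊t_v / Δ⌋ - ⌊t_r / Δ⌋ : ℤ) : ℝ) ≤ W / Δ) :
    t < t_r + W + Δ + ε := by
  obtain ⟨n, hn⟩ := hdvd
  have hWΔ : W / Δ = (n : ℝ) := by rw [hn]; field_simp
  rw [hWΔ] at hfresh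
  have hZ : ⌊t_v / Δ⌋ ≤ ⌊t_r / Δ⌋ + n := by
    have h : (⌊t_v / Δ⌋ - ⌊t_r / Δ⌋ : ℤ) ≤ n := by exact_mod_cast hfresh
    omega
  have h1 : t_v / Δ < ⌊t_v / Δ⌋ + 1 := Int.lt_floor_add_one _
  have h2 : (⌊t_r / Δ⌋ : ℝ) ≤ t_r / Δ := Int.floor_le _
  have h3 : t_v / Δ < t_r / Δ + n + 1 := by
    have : ((⌊t_v / Δ⌋ : ℝ)) ≤ (⌊t_r / Δ⌋ : ℝ) + n := by exact_mod_cast hZ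
    linarith
  have h4 : t_v < t_r + W + Δ := by
    have key : t_v / Δ < (t_r + W + Δ) / Δ := by
      rw [show (t_r + W + Δ) / Δ = t_r / Δ + n + 1 by rw [hn]; field_simp]
      exact h3
    exact (div_lt_div_iff_of_pos_right hΔ).mp key
  have h5 : t - t_v ≤ ε := by
    have := abs_le.mp hskew; linarith [this.1]
  linarith
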